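/- If σₙ is defined implicitly by √((b + 1/κ)² + (2σₙ + b)²) − 1/κ + ε = μ/2 with b < 1/n³, ε < 1/n³, κ bounded above, and μ = c/n² for a constant c > 0, then for n sufficiently large, 2σₙ > C/n for some constant C > 0; in particular Σ σₙ = ∞. -/
import Mathlib


set_option maxHeartbeats 1000000 in
/-- If σₙ is defined implicitly by √((bₙ+1/κₙ)² + (2σₙ+bₙ)²) − 1/κₙ + εₙ = μₙ/2 with
bₙ, εₙ < 1/n³, κₙ ≤ κ₀ and μₙ ≥ c/n², then σₙ ≥ C/n for some C > 0 and all large n;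
in particular Σσₙ diverges. -/
theorem sigma_lower_bound_and_divergence
    (κ₀ c : ℝ) (hκ₀ : 0 < κ₀) (hc : 0 < c)
    (κ b ε μ σ : ℕ → ℝ)
    (hκ : ∀ n : ℕ, 1 ≤ n → 0 < κ n ∧ κ n ≤ κ₀)
    (hb : ∀ n : ℕ, 1 ≤ n → 0 < b n ∧ b n < 1/(n:ℝ)^3)
    (hε : ∀ n : ℕ, 1 ≤ n → 0 < ε n ∧ ε n < 1/(n:ℝ)^3)
    (hμ : ∀ n : ℕ, 1 ≤ n → c/(n:ℝ)^2 ≤ μ n)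
    (hσ : ∀ n : ℕ, 1 ≤ n → 0 < σ n)
    (heq : ∀ n : ℕ, 1 ≤ n →
      Real.sqrt ((b n + 1/κ n)^2 + (2*σ n + b n)^2) - 1/κ n + ε n = μ n / 2) :
    (∃ C > (0:ℝ), ∃ N : ℕ, ∀ n : ℕ, N ≤ n → C/(n:ℝ) ≤ σ n) ∧ ¬ Summable σ := by
  set D : ℝ := Real.sqrt (c / (2 * κ₀)) with hDdef
  have hcκ : 0 < c / (2 * κ₀) := by positivity
  have hD : 0 < D := Real.sqrt_pos.2 hcκ
  have hD2 : D ^ 2 = c / (2 * κ₀) := Real.sq_sqrt hcκ.le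
  set C : ℝ := D / 4 with hCdef
  have hC : 0 < C := by positivity
  set N : ℕ := ⌈8 / c⌉₊ + ⌈2 / D⌉₊ + 1 with hNdef
  clear_value D C N
  have key : ∀ n : ℕ, N ≤ n → C / (n : ℝ) ≤ σ n := by
    intro n hn
    have hn1 : 1 ≤ n := by omega
    have hnR : (1 : ℝ) ≤ (n : ℝ) := by exact_mod_cast hn1
    have hnpos : (0 : ℝ) < (n : ℝ) := by linarith
    have hn8c : 8 / c ≤ (n : ℝ) := by
      have h1 : (⌈8 / c⌉₊ : ℝ) ≤ (n : ℝ) := by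
        exact_mod_cast (by omega : ⌈8 / c⌉₊ ≤ n)
      exact (Nat.le_ceil _).trans h1
    have hn2D : 2 / D ≤ (n : ℝ) := by
      have h1 : (⌈2 / D⌉₊ : ℝ) ≤ (n : ℝ) := by
        exact_mod_cast (by omega : ⌈2 / D⌉₊ ≤ n)
      exact (Nat.le_ceil _).trans h1
    have h8cn : 8 ≤ c * (n : ℝ) := by
      have := (div_le_iff₀ hc).1 hn8c
      linarith
    obtain ⟨hκpos, hκle⟩ := hκ n hn1
    obtain ⟨hbpos, hblt⟩ := hb n hn1
    obtain ⟨hεpos, hεlt⟩ := hε n hn1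
    have hμn := hμ n hn1
    have hσn := hσ n hn1
    have heqn := heq n hn1
    have hκ₀inv : 1 / κ₀ ≤ 1 / κ n := by
      apply one_div_le_one_div_of_le hκpos hκle
    -- R = sqrt(...) = μ/2 - ε + 1/κ
    set A : ℝ := b n + 1 / κ n with hAdef
    set s : ℝ := 2 * σ n + b n with hsdef
    have hApos : 0 < A := by positivity
    have hspos : 0 < s := by positivity
    have hR : Real.sqrt (A ^ 2 + s ^ 2) = μ n / 2 - ε n + 1 / κ n := by
      rw [hAdef, hsdef]; linarith [heqn]
    have hsq : A ^ 2 + s ^ 2 = (μ n / 2 - ε n + 1 / κ n) ^ 2 := by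
      rw [← hR, Real.sq_sqrt (by positivity)]
    -- bounds
    have hn2pos : (0 : ℝ) < (n : ℝ) ^ 2 := by positivity
    have hn3pos : (0 : ℝ) < (n : ℝ) ^ 3 := by positivity
    have hb2 : b n < c / (8 * (n : ℝ) ^ 2) := by
      refine hblt.trans_le ?_
      rw [div_le_div_iff₀ hn3pos (by positivity)]
      nlinarith [mul_le_mul_of_nonneg_right h8cn hn2pos.le]
    have hε2 : ε n < c / (8 * (n : ℝ) ^ 2) := by
      refine hεlt.trans_le ?_
      rw [div_le_div_iff₀ hn3pos (by positivity)]
      nlinarith [mul_le_mul_of_nonneg_right h8cn hn2pos.le]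
    have hμ2 : c / (2 * (n : ℝ) ^ 2) ≤ μ n / 2 := by
      rw [div_le_div_iff₀ (by positivity) (by norm_num)]
      have := (div_le_iff₀ hn2pos).1 hμn
      nlinarith
    -- R - A ≥ c/(4n²)
    have hRA1 : c / (4 * (n : ℝ) ^ 2) ≤ (μ n / 2 - ε n + 1 / κ n) - A := by
      rw [hAdef]
      have h1 : c / (4 * (n : ℝ) ^ 2) = c / (2 * (n : ℝ) ^ 2) - 2 * (c / (8 * (n : ℝ) ^ 2)) := by
        field_simp; ring
      rw [h1]; linarith
    -- R + A ≥ 2/κ₀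
    have hRA2 : 2 / κ₀ ≤ (μ n / 2 - ε n + 1 / κ n) + A := by
      rw [hAdef]
      have hme : 0 < μ n / 2 - ε n := by
        have : c / (8 * (n : ℝ) ^ 2) ≤ c / (2 * (n : ℝ) ^ 2) := by
          apply div_le_div_of_nonneg_left hc.le (by positivity); nlinarith
        linarith
      have : 2 / κ₀ = 1 / κ₀ + 1 / κ₀ := by ring
      linarith
    -- s² ≥ (D/n)²
    have hs2 : (D / (n : ℝ)) ^ 2 ≤ s ^ 2 := by
      have hs2' : s ^ 2 = ((μ n / 2 - ε n + 1 / κ n) - A) * ((μ n / 2 - ε n + 1 / κ n) + A) := by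
        nlinarith [hsq]
      have hprod : c / (4 * (n : ℝ) ^ 2) * (2 / κ₀) ≤ s ^ 2 := by
        rw [hs2']
        have h0 : (0:ℝ) ≤ c / (4 * (n : ℝ) ^ 2) := by positivity
        have h2 : (0:ℝ) ≤ 2 / κ₀ := by positivity
        exact mul_le_mul hRA1 hRA2 h2 (le_trans h0 hRA1)
      have heqD : (D / (n : ℝ)) ^ 2 = c / (4 * (n : ℝ) ^ 2) * (2 / κ₀) := by
        rw [div_pow, hD2]; field_simp; ring
      linarith [heqD ▸ hprod]
    have hsD : D / (n : ℝ) ≤ s := by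
      have h := Real.sqrt_le_sqrt hs2
      rwa [Real.sqrt_sq (by positivity), Real.sqrt_sq hspos.le] at h
    -- b ≤ (D/2)/n
    have hbD : b n ≤ D / 2 / (n : ℝ) := by
      have h2D : 2 ≤ D * (n : ℝ) := by
        have := (div_le_iff₀ hD).1 hn2D; linarith
      have : 1 / (n : ℝ) ^ 3 ≤ D / 2 / (n : ℝ) := by
        rw [div_le_div_iff₀ hn3pos hnpos]
        have hn2 : (n : ℝ) ≤ (n : ℝ) ^ 2 := le_self_pow₀ hnR two_ne_zero
        have key2 : 2 * (n:ℝ)^2 ≤ D * (n:ℝ) * (n:ℝ)^2 :=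
          mul_le_mul_of_nonneg_right h2D hn2pos.le
        have e : D / 2 * (n:ℝ)^3 = (D * (n:ℝ) * (n:ℝ)^2) / 2 := by ring
        linarith
      linarith [hblt.le.trans this]
    have : 2 * σ n = s - b n := by rw [hsdef]; ring
    have h2σ : D / 2 / (n : ℝ) ≤ 2 * σ n := by
      rw [this]
      have : D / (n:ℝ) - D / 2 / (n:ℝ) = D / 2 / (n:ℝ) := by ring
      linarith
    rw [hCdef]
    rw [div_le_iff₀ hnpos] at h2σ ⊢
    linarith
  refine ⟨⟨C, hC, N, key⟩, ?_⟩
  intro hsum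
  have hshift : Summable (fun k : ℕ => σ (k + N)) := (summable_nat_add_iff N).2 hsum
  have hN1 : 1 ≤ N := by omega
  have hsum2 : Summable (fun k : ℕ => C / ((k + N : ℕ) : ℝ)) := by
    apply Summable.of_nonneg_of_le (fun k => by positivity) (fun k => key (k + N) (by omega)) hshift
  have hsum3 : Summable (fun n : ℕ => C / (n : ℝ)) := (summable_nat_add_iff N).1 hsum2
  have hsum4 : Summable (fun n : ℕ => 1 / (n : ℝ)) := by
    have := hsum3.mul_left C⁻¹
    refine this.congr fun n => ?_
    field_simp
  exact Real.not_summable_one_div_natCast hsum4
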